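/- Let a : [t_i, t_f] → ℝ be C¹ and positive with H = a'/a, and let λ satisfy λ'(t) = a(t). Then ∫_{λ(t_i)}^{λ(t_f)} H dλ = ∫_{t_i}^{t_f} a'(t) dt = a(t_f) − a(t_i). In particular if H_av = (a(t_f) − a(t_i))/(λ(t_f) − λ(t_i)) > 0, then λ(t_f) − λ(t_i) = (a(t_f) − a(t_i))/H_av ≤ a(t_f)/H_av. -/
import Mathlib


open MeasureTheory Set Real

theorem stmt_11 (t_i t_f : ℝ) (hti : t_i < t_f) (a a' lam H : ℝ → ℝ)
    (hapos : ∀ t ∈ Set.Icc t_i t_f, 0 < a t)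
    (hader : ∀ t ∈ Set.Icc t_i t_f, HasDerivAt a (a' t) t)
    (hacont : ContinuousOn a' (Set.Icc t_i t_f))
    (hH : ∀ t ∈ Set.Icc t_i t_f, H t = a' t / a t)
    (hlam : ∀ t ∈ Set.Icc t_i t_f, HasDerivAt lam (a t) t) :
    (∫ t in t_i..t_f, H t * a t) = a t_f - a t_i ∧
    ∀ Hav : ℝ, Hav = (a t_f - a t_i) / (lam t_f - lam t_i) → 0 < Hav →
      lam t_f - lam t_i ≤ a t_f / Hav := by
  have huIcc : Set.uIcc t_i t_f = Set.Icc t_i t_f := Set.uIcc_of_le hti.le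
  have hint : (∫ t in t_i..t_f, H t * a t) = ∫ t in t_i..t_f, a' t := by
    apply intervalIntegral.integral_congr
    intro t ht
    rw [huIcc] at ht
    simp only []
    rw [hH t ht, div_mul_cancel₀ _ (hapos t ht).ne']
  have hFTC : (∫ t in t_i..t_f, a' t) = a t_f - a t_i := by
    apply intervalIntegral.integral_eq_sub_of_hasDerivAt
    · intro t ht; rw [huIcc] at ht; exact hader t ht
    · exact (hacont.mono (by rw [huIcc])).intervalIntegrable
  refine ⟨hint.trans hFTC, ?_⟩
  intro Hav hHav hHavpos
  -- lam t_f - lam t_i = ∫ a > 0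
  have hacontOn : ContinuousOn a (Set.Icc t_i t_f) := fun t ht =>
    (hader t ht).continuousAt.continuousWithinAt
  have hlamFTC : (∫ t in t_i..t_f, a t) = lam t_f - lam t_i := by
    apply intervalIntegral.integral_eq_sub_of_hasDerivAt
    · intro t ht; rw [huIcc] at ht; exact hlam t ht
    · exact (hacontOn.mono (by rw [huIcc])).intervalIntegrable
  have hLpos : 0 < lam t_f - lam t_i := by
    rw [← hlamFTC]
    apply intervalIntegral.intervalIntegral_pos_of_pos_on
    · exact (hacontOn.mono (by rw [huIcc])).intervalIntegrable
    · intro t ht; exact hapos t ⟨ht.1.le, ht.2.le⟩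
    · exact hti
  have hD : a t_f - a t_i = Hav * (lam t_f - lam t_i) := by
    rw [hHav]; field_simp
  have hkey : lam t_f - lam t_i = (a t_f - a t_i) / Hav := by
    rw [hD]; field_simp
  rw [hkey]
  have : a t_f - a t_i ≤ a t_f := by linarith [hapos t_i ⟨le_refl _, hti.le⟩]
  gcongr
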